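/- The unique binary operation ⋆ on {1,...,N} satisfying p ⋆ 1 = p+1 mod N and p ⋆ (q ⋆ 1) = (p ⋆ q) ⋆ (p ⋆ 1) is left distributive (p ⋆ (q ⋆ r) = (p ⋆ q) ⋆ (p ⋆ r) for all p,q,r) if and only if N is a power of 2. -/

import Mathlib

def LaverAxioms (N : ℕ) (star : ℕ → ℕ → ℕ) : Prop :=
  (∀ p q, p ∈ Set.Icc 1 N → q ∈ Set.Icc 1 N → star p q ∈ Set.Icc 1 N) ∧
  (∀ p ∈ Set.Icc 1 N, star p 1 = p % N + 1) ∧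
  (∀ p q, p ∈ Set.Icc 1 N → q ∈ Set.Icc 1 N →
    star p (star q 1) = star (star p q) (star p 1))

/-!
Both sides of the equivalence follow from the axioms. Row `N` is the identity, and for `p < N`
row `p` increases strictly from `p + 1` until it reaches `N` at its period `π(p)`, after which it
repeats; since `p ⋆ N = N`, `π(p) ∣ N`. Left distributivity follows by descending induction on
`p` and `q` and ascending induction on `r`: writing `r + 1 = r ⋆ 1` reduces `p ⋆ (q ⋆ (r + 1))`
to instances with `q` replaced by the larger `q ⋆ r` and `p` by the larger `p ⋆ q`.

For the power of two, left distributivity gives `a ⋆ (x ⋆ π(a)) = (a ⋆ x) ⋆ N = N`, so `π(a)`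
divides every `x ⋆ π(a)`. When row `N - M` is the translation `x ↦ N - M + x` on `[1, M]`, taking
`x = N - M` shows that every period below `2M` divides `M`. Hence, by induction on `k`, the rows
in the window `(N - 2^k, N)` have periods dividing `2^k`, which makes row `N - 2^k` a translation
as long as `2^k < N`; its period `2^k` then divides `N`, and for the largest `2^k ≤ N` this forces
`N = 2^k`.
-/

-- The period `π(p)` of row `p`, cf. `star_add_of_star_eq_top`.
noncomputable def laverPeriod (N : ℕ) (star : ℕ → ℕ → ℕ) (p : ℕ) : ℕ :=
  sInf {t | 0 < t ∧ star p t = N}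

namespace LaverAxioms

variable {N : ℕ} {star : ℕ → ℕ → ℕ}

theorem star_mem (h : LaverAxioms N star) {p q : ℕ} (hp : 1 ≤ p) (hpN : p ≤ N) (hq : 1 ≤ q)
    (hqN : q ≤ N) : 1 ≤ star p q ∧ star p q ≤ N :=
  h.1 p q ⟨hp, hpN⟩ ⟨hq, hqN⟩

theorem star_one_of_lt (h : LaverAxioms N star) {p : ℕ} (hp : 1 ≤ p) (hpN : p < N) :
    star p 1 = p + 1 := by
  rw [h.2.1 p ⟨hp, hpN.le⟩, Nat.mod_eq_of_lt hpN]

theorem top_star_one (h : LaverAxioms N star) (hN : 0 < N) : star N 1 = 1 := by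
  rw [h.2.1 N ⟨hN, le_rfl⟩, Nat.mod_self]

theorem star_star_one (h : LaverAxioms N star) {p q : ℕ} (hp : 1 ≤ p) (hpN : p ≤ N)
    (hq : 1 ≤ q) (hqN : q ≤ N) : star p (star q 1) = star (star p q) (star p 1) :=
  h.2.2 p q ⟨hp, hpN⟩ ⟨hq, hqN⟩

theorem star_succ (h : LaverAxioms N star) {p q : ℕ} (hp : 1 ≤ p) (hpN : p ≤ N) (hq : 1 ≤ q)
    (hqN : q < N) : star p (q + 1) = star (star p q) (star p 1) := by
  rw [← h.star_one_of_lt hq hqN, h.star_star_one hp hpN hq hqN.le]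

theorem top_star (h : LaverAxioms N star) {q : ℕ} (hq : 1 ≤ q) (hqN : q ≤ N) : star N q = q := by
  induction q, hq using Nat.le_induction with
  | base => exact h.top_star_one hqN
  | succ q hq ih =>
    rw [h.star_succ (by omega) le_rfl hq hqN, ih (by omega), h.top_star_one (by omega),
      h.star_one_of_lt hq hqN]

theorem lt_star (h : LaverAxioms N star) {p q : ℕ} (hp : 1 ≤ p) (hpN : p < N) (hq : 1 ≤ q)
    (hqN : q ≤ N) : p < star p q := by
  induction p using Nat.strong_decreasing_induction generalizing q with
  | base => exact ⟨N, fun m hm => by intros; omega⟩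
  | step p ihp =>
    induction q, hq using Nat.le_induction with
    | base => rw [h.star_one_of_lt hp hpN]; omega
    | succ q hq ihq =>
      have hpq := ihq (by omega)
      obtain ⟨-, hpqN⟩ := h.star_mem hp hpN.le hq (by omega)
      rw [h.star_succ hp hpN.le hq hqN, h.star_one_of_lt hp hpN]
      rcases hpqN.eq_or_lt with hpqN | hpqN
      · rw [hpqN, h.top_star (by omega) (by omega)]; omega
      · exact hpq.trans (ihp _ hpq (by omega) hpqN (by omega) (by omega))

theorem star_top (h : LaverAxioms N star) {p : ℕ} (hp : 1 ≤ p) (hpN : p ≤ N) : star p N = N := by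
  rcases hpN.eq_or_lt with rfl | hpN
  · exact h.top_star hp le_rfl
  obtain ⟨hs, hsN⟩ := h.star_mem hp hpN.le (by omega) le_rfl
  by_contra hne
  -- otherwise `p + 1 = (p ⋆ N) ⋆ (p + 1) > p ⋆ N > p`
  have key := h.star_star_one hp hpN.le (by omega) le_rfl
  rw [h.top_star_one (by omega), h.star_one_of_lt hp hpN] at key
  have := h.lt_star hp hpN (by omega) le_rfl
  have := h.lt_star hs (lt_of_le_of_ne hsN hne) (q := p + 1) (by omega) (by omega)
  omega

theorem left_distrib (h : LaverAxioms N star) {p q r : ℕ} (hp : 1 ≤ p) (hpN : p ≤ N)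
    (hq : 1 ≤ q) (hqN : q ≤ N) (hr : 1 ≤ r) (hrN : r ≤ N) :
    star p (star q r) = star (star p q) (star p r) := by
  induction p using Nat.strong_decreasing_induction generalizing q r with
  | base => exact ⟨N, fun m hm => by intros; omega⟩
  | step p ihp =>
    rcases hpN.eq_or_lt with rfl | hpN
    · obtain ⟨hqr, hqrN⟩ := h.star_mem hq hqN hr hrN
      rw [h.top_star hqr hqrN, h.top_star hq hqN, h.top_star hr hrN]
    induction q using Nat.strong_decreasing_induction generalizing r with
    | base => exact ⟨N, fun m hm => by intros; omega⟩
    | step q ihq =>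
      rcases hqN.eq_or_lt with rfl | hqN
      · obtain ⟨hpr, hprN⟩ := h.star_mem hp hpN.le hr hrN
        rw [h.top_star hr hrN, h.star_top hp hpN.le, h.top_star hpr hprN]
      induction r, hr using Nat.le_induction with
      | base => exact h.star_star_one hp hpN.le hq hqN.le
      | succ r hr ihr =>
        have hqr := h.lt_star hq hqN hr (by omega)
        obtain ⟨-, hqrN⟩ := h.star_mem hq hqN.le hr (by omega)
        obtain ⟨hq1, hq1N⟩ := h.star_mem hq hqN.le le_rfl (by omega)
        obtain ⟨hpq, hpqN⟩ := h.star_mem hp hpN.le hq hqN.le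
        obtain ⟨hpr, hprN⟩ := h.star_mem hp hpN.le hr (by omega)
        obtain ⟨hp1, hp1N⟩ := h.star_mem hp hpN.le le_rfl (by omega)
        calc star p (star q (r + 1))
            = star p (star (star q r) (star q 1)) := by rw [h.star_succ hq hqN.le hr (by omega)]
          _ = star (star p (star q r)) (star p (star q 1)) :=
            ihq _ hqr (by omega) hqrN hq1 hq1N
          _ = star (star (star p q) (star p r)) (star (star p q) (star p 1)) := by
            rw [ihr (by omega), h.star_star_one hp hpN.le hq hqN.le]
          _ = star (star p q) (star (star p r) (star p 1)) :=
            (ihp _ (h.lt_star hp hpN hq hqN.le) hpq hpqN hpr hprN hp1 hp1N).symm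
          _ = star (star p q) (star p (r + 1)) := by
            rw [h.star_succ hp hpN.le hr (by omega)]

theorem star_add_of_star_eq_top (h : LaverAxioms N star) {p t r : ℕ} (hp : 1 ≤ p) (hpN : p ≤ N)
    (ht : 1 ≤ t) (hpt : star p t = N) (hr : 1 ≤ r) (htr : t + r ≤ N) :
    star p (t + r) = star p r := by
  induction r, hr using Nat.le_induction with
  | base =>
    obtain ⟨hp1, hp1N⟩ := h.star_mem hp hpN le_rfl (by omega)
    rw [h.star_succ hp hpN ht (by omega), hpt, h.top_star hp1 hp1N]
  | succ r hr ih =>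
    rw [← add_assoc, h.star_succ hp hpN (by omega) (by omega), ih (by omega),
      ← h.star_succ hp hpN hr (by omega)]

theorem laverPeriod_spec (h : LaverAxioms N star) {p : ℕ} (hp : 1 ≤ p) (hpN : p ≤ N) :
    0 < laverPeriod N star p ∧ star p (laverPeriod N star p) = N :=
  Nat.sInf_mem (s := {t | 0 < t ∧ star p t = N}) ⟨N, by omega, h.star_top hp hpN⟩

theorem laverPeriod_le_of_star_eq_top {p t : ℕ} (ht : 0 < t) (hpt : star p t = N) :
    laverPeriod N star p ≤ t :=
  Nat.sInf_le ⟨ht, hpt⟩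

theorem laverPeriod_dvd_of_star_eq_top (h : LaverAxioms N star) {p s : ℕ} (hp : 1 ≤ p)
    (hpN : p ≤ N) (hs : 1 ≤ s) (hsN : s ≤ N) (hps : star p s = N) : laverPeriod N star p ∣ s := by
  obtain ⟨ht, hpt⟩ := h.laverPeriod_spec hp hpN
  set t := laverPeriod N star p
  induction s using Nat.strong_induction_on with
  | _ s ih =>
    have hts : t ≤ s := laverPeriod_le_of_star_eq_top hs hps
    rcases hts.eq_or_lt with rfl | hts
    · exact dvd_rfl
    have hshift := h.star_add_of_star_eq_top hp hpN ht hpt (r := s - t) (by omega) (by omega)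
    rw [Nat.add_sub_cancel' hts.le, hps] at hshift
    have := Nat.dvd_add (dvd_refl t) (ih (s - t) (by omega) (by omega) (by omega) hshift.symm)
    rwa [Nat.add_sub_cancel' hts.le] at this

theorem star_eq_top_of_laverPeriod_dvd (h : LaverAxioms N star) {p s : ℕ} (hp : 1 ≤ p)
    (hpN : p ≤ N) (hs : 1 ≤ s) (hsN : s ≤ N) (hdvd : laverPeriod N star p ∣ s) : star p s = N := by
  obtain ⟨ht, hpt⟩ := h.laverPeriod_spec hp hpN
  obtain ⟨j, rfl⟩ := hdvd
  induction j with
  | zero => omega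
  | succ j ih =>
    rcases j.eq_zero_or_pos with rfl | hj
    · simpa using hpt
    have hle : laverPeriod N star p ≤ laverPeriod N star p * j := Nat.le_mul_of_pos_right _ hj
    rw [mul_add_one, add_comm, h.star_add_of_star_eq_top hp hpN ht hpt (by nlinarith) (by linarith),
      ih (by nlinarith) (by linarith)]

theorem add_laverPeriod_le (h : LaverAxioms N star) {p : ℕ} (hp : 1 ≤ p) (hpN : p < N) :
    p + laverPeriod N star p ≤ N := by
  obtain ⟨ht, hpt⟩ := h.laverPeriod_spec hp hpN.le
  have htN := laverPeriod_le_of_star_eq_top (by omega) (h.star_top hp hpN.le)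
  have hgrow : ∀ x, 1 ≤ x → x ≤ laverPeriod N star p → p + x ≤ star p x := by
    intro x hx hxt
    induction x, hx using Nat.le_induction with
    | base => rw [h.star_one_of_lt hp hpN]
    | succ x hx ih =>
      have hpx : star p x ≠ N := fun hpx => by
        have := laverPeriod_le_of_star_eq_top hx hpx
        omega
      obtain ⟨-, hpxN⟩ := h.star_mem hp hpN.le hx (by omega)
      rw [h.star_succ hp hpN.le hx (by omega), h.star_one_of_lt hp hpN]
      have := h.lt_star (by omega) (lt_of_le_of_ne hpxN hpx) (q := p + 1) (by omega) (by omega)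
      omega
  simpa [hpt] using hgrow _ ht le_rfl

theorem laverPeriod_dvd_top (h : LaverAxioms N star) {p : ℕ} (hp : 1 ≤ p) (hpN : p ≤ N) :
    laverPeriod N star p ∣ N :=
  h.laverPeriod_dvd_of_star_eq_top hp hpN (by omega) le_rfl (h.star_top hp hpN)

theorem star_sub_eq_add (h : LaverAxioms N star) {M : ℕ} (hMN : M < N)
    (hwin : ∀ a, N - M < a → a < N → laverPeriod N star a ∣ M) (x : ℕ) (hx : 1 ≤ x)
    (hxM : x ≤ M) : star (N - M) x = N - M + x := by
  induction x, hx using Nat.le_induction with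
  | base => exact h.star_one_of_lt (by omega) (by omega)
  | succ x hx ih =>
    have hdvd : laverPeriod N star (N - M + x) ∣ N - M :=
      Nat.dvd_sub (h.laverPeriod_dvd_top (by omega) (by omega)) (hwin _ (by omega) (by omega))
    have hper := h.star_eq_top_of_laverPeriod_dvd (p := N - M + x) (by omega) (by omega)
      (by omega) (by omega) hdvd
    rw [h.star_succ (by omega) (by omega) hx (by omega), ih (by omega),
      h.star_one_of_lt (by omega) (by omega),
      h.star_add_of_star_eq_top (by omega) (by omega) (by omega) hper le_rfl (by omega),
      h.star_one_of_lt (by omega) (by omega), add_assoc]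

theorem dvd_of_star_sub_eq_add (h : LaverAxioms N star) {M : ℕ} (hM : 0 < M) (hMN : M < N)
    (hrow : ∀ x, 1 ≤ x → x ≤ M → star (N - M) x = N - M + x) : M ∣ N := by
  obtain ⟨ht, hct⟩ := h.laverPeriod_spec (p := N - M) (by omega) (by omega)
  have htM : laverPeriod N star (N - M) ≤ M :=
    laverPeriod_le_of_star_eq_top hM (by rw [hrow M hM le_rfl]; omega)
  rw [hrow _ ht htM] at hct
  have hper : laverPeriod N star (N - M) = M := by omega
  exact hper ▸ h.laverPeriod_dvd_top (by omega) (by omega)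

theorem laverPeriod_dvd_of_lt_two_mul (h : LaverAxioms N star) {M : ℕ} (hM : 0 < M)
    (hMN : M < N) (hrow : ∀ x, 1 ≤ x → x ≤ M → star (N - M) x = N - M + x) {a : ℕ}
    (ha : 1 ≤ a) (haN : a ≤ N) (hlt : laverPeriod N star a < 2 * M) :
    laverPeriod N star a ∣ M := by
  obtain ⟨ht, hat⟩ := h.laverPeriod_spec ha haN
  set t := laverPeriod N star a
  have htN : t ≤ N := laverPeriod_le_of_star_eq_top (by omega) (h.star_top ha haN)
  obtain ⟨hct, hctN⟩ := h.star_mem (p := N - M) (by omega) (by omega) ht htN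
  obtain ⟨hac, hacN⟩ := h.star_mem (q := N - M) ha haN (by omega) (by omega)
  -- `a ⋆ ((N - M) ⋆ t) = (a ⋆ (N - M)) ⋆ N = N`
  have hdvd : t ∣ star (N - M) t := by
    refine h.laverPeriod_dvd_of_star_eq_top ha haN hct hctN ?_
    rw [h.left_distrib ha haN (by omega) (by omega) ht htN, hat, h.star_top hac hacN]
  have hdvdN := h.laverPeriod_dvd_top ha haN
  rcases le_or_gt t M with htM | htM
  · rw [hrow t ht htM] at hdvd
    have := Nat.dvd_sub hdvdN hdvd
    rw [show N - (N - M + t) = M - t by omega] at this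
    simpa [Nat.sub_add_cancel htM] using Nat.dvd_add this (dvd_refl t)
  · have hshift := h.star_add_of_star_eq_top (p := N - M) (t := M) (r := t - M) (by omega)
      (by omega) hM (by rw [hrow M hM le_rfl]; omega) (by omega) (by omega)
    rw [Nat.add_sub_cancel' htM.le, hrow (t - M) (by omega) (by omega)] at hshift
    rw [hshift] at hdvd
    have := Nat.le_of_dvd (by omega) (Nat.dvd_sub hdvdN hdvd)
    omega

theorem laverPeriod_dvd_two_pow (h : LaverAxioms N star) {k : ℕ} (hk : 2 ^ k ≤ N) {a : ℕ}
    (ha : N - 2 ^ k < a) (haN : a < N) : laverPeriod N star a ∣ 2 ^ k := by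
  induction k generalizing a with
  | zero => omega
  | succ k ih =>
    rw [pow_succ] at hk ha
    have hpos : 0 < 2 ^ k := by positivity
    have hkN : 2 ^ k < N := by omega
    have hrow := h.star_sub_eq_add hkN (fun b hb hbN => ih hkN.le hb hbN)
    have := h.add_laverPeriod_le (by omega) haN
    exact (h.laverPeriod_dvd_of_lt_two_mul hpos hkN hrow (by omega) haN.le (by omega)).trans
      (pow_dvd_pow 2 k.le_succ)

theorem exists_eq_two_pow (h : LaverAxioms N star) (hN : 0 < N) : ∃ k, N = 2 ^ k := by
  refine ⟨Nat.log 2 N, ?_⟩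
  set k := Nat.log 2 N
  have hle : 2 ^ k ≤ N := Nat.pow_log_le_self 2 hN.ne'
  have hlt : N < 2 ^ k * 2 := pow_succ 2 k ▸ Nat.lt_pow_succ_log_self one_lt_two N
  by_contra hne
  have hkN : 2 ^ k < N := lt_of_le_of_ne hle (Ne.symm hne)
  obtain ⟨j, hj⟩ := h.dvd_of_star_sub_eq_add (by positivity) hkN
    (h.star_sub_eq_add hkN fun a ha haN => h.laverPeriod_dvd_two_pow hle ha haN)
  rw [hj] at hkN hlt
  have hj1 : 1 < j := by nlinarith
  have hj2 : j < 2 := by nlinarith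
  omega

end LaverAxioms

/-- the unique operation ⋆ on {1,...,N} satisfying the Laver axioms is
left distributive if and only if N is a power of 2. -/
theorem laver_left_distributive_iff_pow_two (N : ℕ) (hN : 0 < N)
    (star : ℕ → ℕ → ℕ) (h : LaverAxioms N star) :
    (∀ p ∈ Set.Icc 1 N, ∀ q ∈ Set.Icc 1 N, ∀ r ∈ Set.Icc 1 N,
        star p (star q r) = star (star p q) (star p r)) ↔ ∃ k, N = 2 ^ k :=
  iff_of_true (fun _ hp _ hq _ hr => h.left_distrib hp.1 hp.2 hq.1 hq.2 hr.1 hr.2)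
    (h.exists_eq_two_pow hN)
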